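/- arXiv:2312.10377 — 2 statements merged into one kernel-verified Lean document; each statement's English description precedes it below -/
import Mathlib

section
/- For every n ≥ 2, the graph S_0(n,2) (the simplified de Bruijn graph over the binary alphabet) is properly 3-colorable, i.e., its chromatic number is at most 3. -/
/-- `A^n_m(k)`: words of length `n` over `{0,...,k-1}` with consecutive letters differing by at least `m`. -/
def AWord (m n k : ℕ) (x : List ℕ) : Prop :=
  x.length = n ∧ (∀ a ∈ x, a < k) ∧
    ∀ i, i + 1 < n → m ≤ Nat.dist (x.getD i 0) (x.getD (i+1) 0)

/-- de Bruijn-style adjacency: the suffix of one word equals the prefix of the other. -/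
def dbAdj (u v : List ℕ) : Prop := u.tail = v.dropLast ∨ v.tail = u.dropLast

/-- The simplified de Bruijn-type graph `S_m(n,k)`. -/
def S (m n k : ℕ) : SimpleGraph {x : List ℕ // AWord m n k x} where
  Adj u v := u ≠ v ∧ dbAdj u.1 v.1
  symm := by constructor; intro u v h; exact ⟨h.1.symm, Or.symm h.2⟩
  loopless := by constructor; intro u h; exact h.1 rfl

/-!
Colour a word by `none` when its first run (maximal constant prefix) has even length and by its
first letter otherwise. For adjacent words `u = a :: w` and `v = w ++ [b]`: if `w` starts with `a`,
the first run of `u` is one longer than that of `w`, while appending `b` leaves it unchanged unless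
`u = v`, so exactly one of `u`, `v` is coloured `none`; if `w` starts with `c ≠ a`, then `u` is
coloured `a` while `v` is coloured `none` or `c`. Over a `k`-letter alphabet these are `k + 1`
colours.
-/

namespace List

variable {α : Type*} [DecidableEq α]

def firstRunLength : List α → ℕ
  | [] => 0
  | a :: l => (l.takeWhile (· == a)).length + 1

theorem firstRunLength_cons_cons_self (a : α) (l : List α) :
    firstRunLength (a :: a :: l) = firstRunLength (a :: l) + 1 := by
  simp [firstRunLength]

theorem firstRunLength_cons_cons_of_ne {a c : α} (h : c ≠ a) (l : List α) :
    firstRunLength (a :: c :: l) = 1 := by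
  simp [firstRunLength, h]

theorem firstRunLength_append_singleton {a b : α} {l : List α}
    (h : a :: l ++ [b] ≠ a :: a :: l) :
    firstRunLength (a :: l ++ [b]) = firstRunLength (a :: l) := by
  simp only [cons_append, firstRunLength, takeWhile_append]
  split_ifs with hfull
  · have hconst : ∀ x ∈ l, x = a := by
      simpa using takeWhile_eq_self_iff.mp ((takeWhile_sublist _).eq_of_length hfull)
    have hb : b ≠ a := by
      rintro rfl
      apply h
      rw [eq_replicate_of_mem hconst, ← replicate_succ, ← replicate_succ']
      rfl
    simp [hb, hfull]
  · rfl

def runColor (l : List α) : Option α :=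
  if Even (firstRunLength l) then none else l.head?

theorem runColor_eq_none_or_eq_head? (l : List α) :
    runColor l = none ∨ runColor l = l.head? := by
  unfold runColor
  split_ifs <;> simp

theorem runColor_eq_none_iff {l : List α} (hl : l ≠ []) :
    runColor l = none ↔ Even (firstRunLength l) := by
  unfold runColor
  split_ifs <;> simp_all

theorem runColor_cons_ne_append_singleton {a b : α} {w : List α} (h : a :: w ≠ w ++ [b]) :
    runColor (a :: w) ≠ runColor (w ++ [b]) := by
  rcases w with _ | ⟨c, t⟩
  · simpa [runColor, firstRunLength] using h
  by_cases hca : c = a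
  · subst hca
    have hrun := firstRunLength_append_singleton (Ne.symm h)
    intro heq
    have hparity := runColor_eq_none_iff (l := c :: c :: t) (cons_ne_nil _ _)
    rw [heq, runColor_eq_none_iff (by simp), firstRunLength_cons_cons_self, hrun,
      Nat.even_add_one] at hparity
    exact iff_not_self hparity
  · have hu : runColor (a :: c :: t) = some a := by
      simp [runColor, firstRunLength_cons_cons_of_ne hca]
    rw [hu]
    rcases runColor_eq_none_or_eq_head? (c :: t ++ [b]) with hv | hv <;> rw [hv] <;>
      simp [Ne.symm hca]

theorem runColor_ne_of_tail_eq_dropLast {u v : List α} (hlen : u.length = v.length) (hne : u ≠ v)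
    (h : u.tail = v.dropLast) : runColor u ≠ runColor v := by
  rcases u with _ | ⟨a, w⟩
  · exact absurd (eq_nil_of_length_eq_zero hlen.symm).symm hne
  have hv : v ≠ [] := ne_nil_of_length_pos (hlen ▸ Nat.succ_pos _)
  rw [← dropLast_append_getLast hv, ← h] at hne ⊢
  exact runColor_cons_ne_append_singleton hne

theorem runColor_mem {l : List α} {x : α} (hx : x ∈ runColor l) : x ∈ l := by
  rcases runColor_eq_none_or_eq_head? l with h | h <;> rw [h] at hx
  · simp at hx
  · exact mem_of_mem_head? hx

end List

theorem Option.getD_ne_getD_of_ne {α : Type*} {o o' : Option α} {d : α} (h : o ≠ o')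
    (hd : d ∉ o) (hd' : d ∉ o') : o.getD d ≠ o'.getD d := by
  cases o <;> cases o' <;> simp_all [eq_comm]

theorem S_runColor_ne_of_adj {m n k : ℕ} {u v : {x : List ℕ // AWord m n k x}}
    (huv : (S m n k).Adj u v) : u.1.runColor ≠ v.1.runColor := by
  obtain ⟨hne, hadj⟩ := huv
  have hlen : u.1.length = v.1.length := u.2.1.trans v.2.1.symm
  rcases hadj with h | h
  · exact List.runColor_ne_of_tail_eq_dropLast hlen (Subtype.coe_ne_coe.mpr hne) h
  · exact (List.runColor_ne_of_tail_eq_dropLast hlen.symm (Subtype.coe_ne_coe.mpr hne.symm) h).symm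

theorem S_colorable (m n k : ℕ) : (S m n k).Colorable (k + 1) := by
  have hlt (u : {x : List ℕ // AWord m n k x}) : ∀ x ∈ u.1.runColor, x < k :=
    fun x hx => u.2.2.1 x (List.runColor_mem hx)
  -- `none` becomes colour `k`; every letter, hence every `some` colour, is below `k`.
  refine (SimpleGraph.colorable_iff_exists_bdd_nat_coloring _).mpr
    ⟨.mk (fun u => u.1.runColor.getD k) fun huv => ?_, fun u => ?_⟩
  · exact Option.getD_ne_getD_of_ne (S_runColor_ne_of_adj huv)
      (fun h => (hlt _ k h).false) (fun h => (hlt _ k h).false)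
  · change u.1.runColor.getD k < k + 1
    cases h : u.1.runColor with
    | none => simp
    | some x => simpa using (hlt u x h).le

theorem stmt2_general (n : ℕ) : (S 0 n 2).Colorable 3 :=
  S_colorable 0 n 2

theorem stmt2 (n : ℕ) (hn : 2 ≤ n) : (S 0 n 2).Colorable 3 :=
  stmt2_general n
end

section
/- For n ≥ 3, the map τ sending a permutation x_1x_2...x_n of {1,...,n} to the binary word y_1...y_{n-1}, where y_i = 0 if x_i > x_{i+1} and y_i = 1 otherwise, is a graph homomorphism from the simplified graph of overlapping permutations SP(n) to the simplified de Bruijn graph S_0(n-1,2). -/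
/-- Arc relation of the graph of overlapping permutations `P(n)`. -/
def Parc (n : ℕ) (x y : Equiv.Perm (Fin n)) : Prop :=
  ∀ i j : Fin n, 0 < i.val → i < j →
    (x i < x j ↔ y ⟨i.val - 1, by have := i.isLt; omega⟩ < y ⟨j.val - 1, by have := j.isLt; omega⟩)

/-- The simplified graph of overlapping permutations `SP(n)`. -/
def SP (n : ℕ) : SimpleGraph (Equiv.Perm (Fin n)) where
  Adj u v := u ≠ v ∧ (Parc n u v ∨ Parc n v u)
  symm := by constructor; intro u v h; exact ⟨h.1.symm, Or.symm h.2⟩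
  loopless := by constructor; intro u h; exact h.1 rfl

/-- The descent word of a permutation: `y i = 1` iff `x i < x (i+1)`, else `0`. -/
def tauW (n : ℕ) (x : Equiv.Perm (Fin n)) : List ℕ :=
  List.ofFn (fun i : Fin (n-1) =>
    if x ⟨i.val, by have := i.isLt; omega⟩ < x ⟨i.val + 1, by have := i.isLt; omega⟩ then 1 else 0)

/-!
An arc `u → v` of `P(n)` says that the ascent pattern of `v` at positions `k, k+1` is that of `u`
at positions `k+1, k+2`: `τ(u)` without its first letter is `τ(v)` without its last letter, which
is the de Bruijn overlap. If moreover `τ(u) = τ(v)`, the descent word of `v` equals its own shift,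
so it is constant: `u` and `v` are both increasing or both decreasing, and therefore equal.
-/

namespace Fin

variable {α : Type*} [LinearOrder α] {n : ℕ}

theorem strictMono_or_strictAnti_of_lt_succ_iff {f : Fin n → α} (hf : Function.Injective f)
    (h : ∀ k (hk : k + 2 < n),
      f ⟨k + 1, by omega⟩ < f ⟨k + 2, hk⟩ ↔ f ⟨k, by omega⟩ < f ⟨k + 1, by omega⟩) :
    StrictMono f ∨ StrictAnti f := by
  obtain _ | _ | m := n
  · exact .inl (Subsingleton.strictMono f)
  · exact .inl (strictMono_iff_lt_succ.2 fun i => i.elim0)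
  have hconst : ∀ i : Fin (m + 1), f i.castSucc < f i.succ ↔ f 0 < f 1 := by
    rintro ⟨k, hk⟩
    induction k with
    | zero => rfl
    | succ k ih => exact (h k (by omega)).trans (ih (by omega))
  by_cases hasc : f 0 < f 1
  · exact .inl (strictMono_iff_lt_succ.2 fun i => (hconst i).2 hasc)
  · exact .inr (strictAnti_iff_succ_lt.2 fun i =>
      (not_lt.1 (mt (hconst i).1 hasc)).lt_of_ne
        (hf.ne (castSucc_lt_succ : i.castSucc < i.succ).ne'))

theorem strictMono_iff_of_lt_succ_iff {f g : Fin n → α}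
    (h : ∀ k (hk : k + 1 < n), f ⟨k, by omega⟩ < f ⟨k + 1, hk⟩ ↔ g ⟨k, by omega⟩ < g ⟨k + 1, hk⟩) :
    StrictMono f ↔ StrictMono g := by
  obtain _ | m := n
  · exact iff_of_true (Subsingleton.strictMono f) (Subsingleton.strictMono g)
  simp only [strictMono_iff_lt_succ]
  exact forall_congr' fun i => h i i.succ.isLt

theorem strictAnti_iff_of_lt_succ_iff {f g : Fin n → α} (hf : Function.Injective f)
    (hg : Function.Injective g)
    (h : ∀ k (hk : k + 1 < n), f ⟨k, by omega⟩ < f ⟨k + 1, hk⟩ ↔ g ⟨k, by omega⟩ < g ⟨k + 1, hk⟩) :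
    StrictAnti f ↔ StrictAnti g := by
  obtain _ | m := n
  · exact iff_of_true (Subsingleton.strictAnti f) (Subsingleton.strictAnti g)
  have hdesc {φ : Fin (m + 1) → α} (hφ : Function.Injective φ) (i : Fin m) :
      φ i.succ < φ i.castSucc ↔ ¬ φ i.castSucc < φ i.succ :=
    ⟨lt_asymm, (lt_or_gt_of_ne (hφ.ne (castSucc_lt_succ : i.castSucc < i.succ).ne)).resolve_left⟩
  simp only [strictAnti_iff_succ_lt, hdesc hf, hdesc hg]
  exact forall_congr' fun i => not_congr (h i i.succ.isLt)

end Fin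

open Equiv

theorem Parc.lt_succ_iff {n : ℕ} {u v : Perm (Fin n)} (h : Parc n u v) (k : ℕ) (hk : k + 2 < n) :
    u ⟨k + 1, by omega⟩ < u ⟨k + 2, hk⟩ ↔ v ⟨k, by omega⟩ < v ⟨k + 1, by omega⟩ :=
  h ⟨k + 1, by omega⟩ ⟨k + 2, hk⟩ k.succ_pos (by simp [Fin.lt_def])

theorem lt_succ_iff_of_tauW_eq {n : ℕ} {u v : Perm (Fin n)} (h : tauW n u = tauW n v) (k : ℕ)
    (hk : k + 1 < n) :
    u ⟨k, by omega⟩ < u ⟨k + 1, hk⟩ ↔ v ⟨k, by omega⟩ < v ⟨k + 1, hk⟩ := by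
  have hbit := congrFun (List.ofFn_injective h) ⟨k, by omega⟩
  by_cases hu : u ⟨k, by omega⟩ < u ⟨k + 1, hk⟩ <;>
    by_cases hv : v ⟨k, by omega⟩ < v ⟨k + 1, hk⟩ <;> simp [hu, hv] at hbit ⊢

theorem Parc.eq_of_tauW_eq {n : ℕ} {u v : Perm (Fin n)} (h : Parc n u v)
    (ht : tauW n u = tauW n v) : u = v := by
  have hasc := lt_succ_iff_of_tauW_eq ht
  have hrange : Set.range u = Set.range v := by simp only [Equiv.range_eq_univ]
  rcases Fin.strictMono_or_strictAnti_of_lt_succ_iff v.injective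
      (fun k hk => (hasc (k + 1) hk).symm.trans (h.lt_succ_iff k hk)) with hv | hv
  · have hu := (Fin.strictMono_iff_of_lt_succ_iff hasc).2 hv
    exact DFunLike.coe_injective ((hu.range_inj hv).1 hrange)
  · have hu := (Fin.strictAnti_iff_of_lt_succ_iff u.injective v.injective hasc).2 hv
    exact DFunLike.coe_injective ((hu.range_inj hv).1 hrange)

theorem Parc.tail_tauW_eq_dropLast {n : ℕ} {u v : Perm (Fin n)} (h : Parc n u v) :
    (tauW n u).tail = (tauW n v).dropLast := by
  apply List.ext_getElem
  · simp [tauW]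
  · intro k hk _
    simp only [tauW, List.length_tail, List.length_ofFn] at hk
    simp only [tauW, List.getElem_tail, List.getElem_dropLast, List.getElem_ofFn]
    exact if_congr (h.lt_succ_iff k (by omega)) rfl rfl

theorem aWord_tauW (n : ℕ) (x : Perm (Fin n)) : AWord 0 (n - 1) 2 (tauW n x) := by
  refine ⟨by simp [tauW], ?_, fun _ _ => Nat.zero_le _⟩
  simp only [tauW, List.mem_ofFn]
  rintro _ ⟨i, rfl⟩
  split_ifs <;> omega

theorem stmt5_general (n : ℕ) :
    ∃ f : SP n →g S 0 (n-1) 2, ∀ x : Equiv.Perm (Fin n), (f x).1 = tauW n x := by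
  refine ⟨⟨fun x => ⟨tauW n x, aWord_tauW n x⟩, ?_⟩, fun _ => rfl⟩
  rintro u v ⟨hne, huv | hvu⟩
  · exact ⟨fun heq => hne (huv.eq_of_tauW_eq (congrArg Subtype.val heq)),
      .inl huv.tail_tauW_eq_dropLast⟩
  · exact ⟨fun heq => hne (hvu.eq_of_tauW_eq (congrArg Subtype.val heq).symm).symm,
      .inr hvu.tail_tauW_eq_dropLast⟩

theorem stmt5 (n : ℕ) (hn : 3 ≤ n) :
    ∃ f : SP n →g S 0 (n-1) 2, ∀ x : Equiv.Perm (Fin n), (f x).1 = tauW n x :=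
  stmt5_general n
end
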